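/- Let (A,B) be an n×n real symmetric matrix pencil with B positive definite, let E, F be n×n real symmetric matrices, and set Ã = A + E, B̃ = B + F, with B̃ positive definite. Let (λ_i, u_i), i = 1,…,n, be the eigenpairs of (A,B) with u_i ≠ 0, and let λ̃_1, …, λ̃_n be the eigenvalues of (Ã, B̃). Then for every i = 1, …, n, min_j |λ̃_j − λ_i| ≤ (1/λ_min(B̃)) · ( ‖E u_i‖₂/‖u_i‖₂ + |λ_i|·‖F u_i‖₂/‖u_i‖₂ ), where λ_min(B̃) is the smallest eigenvalue of B̃. -/

import Mathlib

open Matrix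

/-- The Euclidean norm of a vector. -/
noncomputable def euclNorm {m : Type*} [Fintype m] (v : m → ℝ) : ℝ :=
  Real.sqrt (∑ i, (v i) ^ 2)

open scoped MatrixOrder in
/-- The `k`-th smallest generalized eigenvalue (counted with multiplicity) of the
symmetric pencil `(A, B)` with `B` positive definite, i.e. the `k`-th smallest root of
`det (A - λ B) = 0`.  It is defined as the `k`-th smallest eigenvalue of the Hermitian
matrix `√(B⁻¹) * A * √(B⁻¹)`, which is similar to `B⁻¹ * A`.  Junk value `0` is returned
if `A` is not symmetric or `B` is not positive definite. -/
noncomputable def genEig {m : Type*} [Fintype m] [DecidableEq m]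
    (A B : Matrix m m ℝ) (k : Fin (Fintype.card m)) : ℝ :=
  letI := Classical.propDecidable
  if h : A.IsHermitian ∧ B.PosDef then
    let S : Matrix m m ℝ := CFC.sqrt B⁻¹
    have hS : S.IsHermitian := (CFC.sqrt_nonneg B⁻¹).posSemidef.isHermitian
    have hC : (S * A * S).IsHermitian := by
      show (S * A * S)ᴴ = S * A * S
      rw [conjTranspose_mul, conjTranspose_mul, hS.eq, h.1.eq, Matrix.mul_assoc]
    let f : Fin (Fintype.card m) → ℝ := hC.eigenvalues₀
    f (Tuple.sort f k)
  else 0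

/-- The `k`-th smallest generalized eigenvalue of a pencil of `n × n` matrices,
indexed by `Fin n`.  `genEigFin A B 0` is the smallest one, `λ_1(A,B)`, and
`genEigFin A B (Fin.last _)` is the largest one, `λ_n(A,B)`. -/
noncomputable def genEigFin {n : ℕ} (A B : Matrix (Fin n) (Fin n) ℝ) (k : Fin n) : ℝ :=
  genEig A B (Fin.cast (Fintype.card_fin n).symm k)

/-- The (row-sum) lumping operator: `lump B` is the diagonal matrix whose `i`-th
diagonal entry is the sum of the absolute values of the entries of the `i`-th row of `B`. -/
noncomputable def lump {m : Type*} [Fintype m] [DecidableEq m]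
    (B : Matrix m m ℝ) : Matrix m m ℝ :=
  Matrix.diagonal fun i => ∑ j, |B i j|

/-- The banded part `D_i` of a matrix: it keeps all sub- and super-diagonals of index
smaller than `i` (i.e. the entries with `|j - k| < i`) and sets the rest to zero. -/
def diagBand {n : ℕ} (B : Matrix (Fin n) (Fin n) ℝ) (i : ℕ) : Matrix (Fin n) (Fin n) ℝ :=
  Matrix.of fun j k => if |((j : ℕ) : ℤ) - ((k : ℕ) : ℤ)| < (i : ℤ) then B j k else 0

/-- The lumped preconditioner `P_i = D_i + 𝓛(R_i)` where `B = D_i + R_i`, `D_i` being the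
banded part of `B` of bandwidth `i` and `R_i` the remainder. -/
noncomputable def precond {n : ℕ} (B : Matrix (Fin n) (Fin n) ℝ) (i : ℕ) :
    Matrix (Fin n) (Fin n) ℝ :=
  diagBand B i + lump (B - diagBand B i)

/-! With `S = √((B + F)⁻¹)`, the pencil `(A + E, B + F)` has the same eigenvalues as the symmetric
matrix `C = S (A + E) S`. For `w = S⁻¹ uᵢ` one gets `C w - λᵢ w = S r` with the residual
`r = (A + E) uᵢ - λᵢ (B + F) uᵢ = E uᵢ - λᵢ F uᵢ`. Expanding `w` in an orthonormal eigenbasis of `C`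
gives `minⱼ |λ̃ⱼ - λᵢ| ‖w‖ ≤ ‖S r‖`, and the Rayleigh bound `λ_min(B + F) ‖S y‖² ≤ ‖y‖²`, applied
to `y = w` and `y = r`, turns this into the claimed estimate. -/

open scoped MatrixOrder

section EuclNorm

variable {m : Type*} [Fintype m]

lemma euclNorm_eq_norm_toLp (v : m → ℝ) : euclNorm v = ‖WithLp.toLp 2 v‖ := by
  simp [euclNorm, EuclideanSpace.norm_eq]

lemma euclNorm_nonneg (v : m → ℝ) : 0 ≤ euclNorm v := Real.sqrt_nonneg _

lemma euclNorm_pos {v : m → ℝ} (hv : v ≠ 0) : 0 < euclNorm v := by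
  simpa [euclNorm_eq_norm_toLp] using hv

lemma euclNorm_sq (v : m → ℝ) : euclNorm v ^ 2 = v ⬝ᵥ v := by
  rw [euclNorm, Real.sq_sqrt (by positivity)]
  simp [dotProduct, sq]

lemma euclNorm_sub_smul_le (a b : m → ℝ) (c : ℝ) :
    euclNorm (a - c • b) ≤ euclNorm a + |c| * euclNorm b := by
  simpa [euclNorm_eq_norm_toLp, norm_smul]
    using norm_sub_le (WithLp.toLp 2 a) (c • WithLp.toLp 2 b)

end EuclNorm

lemma OrthonormalBasis.sum_dotProduct_mul_dotProduct {ι m : Type*} [Fintype ι] [Fintype m]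
    (b : OrthonormalBasis ι ℝ (EuclideanSpace ℝ m)) (x y : m → ℝ) :
    ∑ i, (⇑(b i) ⬝ᵥ x) * (⇑(b i) ⬝ᵥ y) = x ⬝ᵥ y := by
  simpa [EuclideanSpace.inner_eq_star_dotProduct, dotProduct_comm]
    using b.sum_inner_mul_inner (WithLp.toLp 2 x) (WithLp.toLp 2 y)

lemma Matrix.IsSymm.mulVec_dotProduct {m R : Type*} [Fintype m] [CommSemiring R]
    {S : Matrix m m R} (hS : S.IsSymm) (y z : m → R) :
    (S *ᵥ y) ⬝ᵥ z = y ⬝ᵥ (S *ᵥ z) := by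
  rw [dotProduct_comm, dotProduct_mulVec, ← mulVec_transpose, hS.eq, dotProduct_comm]

namespace Matrix.IsHermitian

variable {m : Type*} [Fintype m] [DecidableEq m] {M : Matrix m m ℝ} (hM : M.IsHermitian)

lemma eigenvectorBasis_dotProduct_mulVec (j : m) (x : m → ℝ) :
    ⇑(hM.eigenvectorBasis j) ⬝ᵥ (M *ᵥ x) = hM.eigenvalues j * (⇑(hM.eigenvectorBasis j) ⬝ᵥ x) := by
  rw [← (isHermitian_iff_isSymm.mp hM).mulVec_dotProduct, hM.mulVec_eigenvectorBasis,
    smul_dotProduct, smul_eq_mul]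

lemma mul_sq_euclNorm_le_dotProduct_mulVec {c : ℝ} (hc : ∀ j, c ≤ hM.eigenvalues j)
    (x : m → ℝ) : c * euclNorm x ^ 2 ≤ x ⬝ᵥ (M *ᵥ x) := by
  rw [euclNorm_sq, ← hM.eigenvectorBasis.sum_dotProduct_mul_dotProduct,
    ← hM.eigenvectorBasis.sum_dotProduct_mul_dotProduct, Finset.mul_sum]
  refine Finset.sum_le_sum fun j _ => ?_
  rw [hM.eigenvectorBasis_dotProduct_mulVec]
  nlinarith [hc j, mul_self_nonneg (⇑(hM.eigenvectorBasis j) ⬝ᵥ x)]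

lemma exists_abs_eigenvalues_sub_mul_euclNorm_le [Nonempty m] (μ : ℝ) (x : m → ℝ) :
    ∃ k, |hM.eigenvalues k - μ| * euclNorm x ≤ euclNorm (M *ᵥ x - μ • x) := by
  obtain ⟨k, hk⟩ := Finite.exists_min fun j => |hM.eigenvalues j - μ|
  refine ⟨k, ?_⟩
  rw [← pow_le_pow_iff_left₀ (mul_nonneg (abs_nonneg _) (euclNorm_nonneg _)) (euclNorm_nonneg _)
    two_ne_zero, mul_pow, euclNorm_sq, euclNorm_sq,
    ← hM.eigenvectorBasis.sum_dotProduct_mul_dotProduct,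
    ← hM.eigenvectorBasis.sum_dotProduct_mul_dotProduct, Finset.mul_sum]
  refine Finset.sum_le_sum fun j _ => ?_
  have hkj := pow_le_pow_left₀ (abs_nonneg _) (hk j) 2
  rw [sq_abs, sq_abs] at hkj
  rw [sq_abs]
  simp only [dotProduct_sub, dotProduct_smul, hM.eigenvectorBasis_dotProduct_mulVec, smul_eq_mul]
  nlinarith [mul_le_mul_of_nonneg_right hkj (mul_self_nonneg (⇑(hM.eigenvectorBasis j) ⬝ᵥ x))]

end Matrix.IsHermitian

section SqrtInv

variable {m : Type*} [Fintype m] [DecidableEq m]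

lemma Matrix.isHermitian_sqrt (B : Matrix m m ℝ) : (CFC.sqrt B).IsHermitian :=
  (CFC.sqrt_nonneg B).posSemidef.isHermitian

lemma Matrix.IsHermitian.sqrt_inv_mul_mul_sqrt_inv {A : Matrix m m ℝ} (hA : A.IsHermitian)
    (B : Matrix m m ℝ) : (CFC.sqrt B⁻¹ * A * CFC.sqrt B⁻¹).IsHermitian := by
  have h := isHermitian_conjTranspose_mul_mul (CFC.sqrt B⁻¹) hA
  rwa [(isHermitian_sqrt B⁻¹).eq] at h

end SqrtInv

namespace Matrix.PosDef

variable {m : Type*} [Fintype m] [DecidableEq m] {B : Matrix m m ℝ}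

lemma sqrt_inv_mul_sqrt_inv_mul_self (hB : B.PosDef) : CFC.sqrt B⁻¹ * CFC.sqrt B⁻¹ * B = 1 := by
  rw [CFC.sqrt_mul_sqrt_self _ hB.inv.posSemidef.nonneg, nonsing_inv_mul _ hB.det_pos.ne'.isUnit]

lemma sqrt_inv_mul_self_mul_sqrt_inv (hB : B.PosDef) : CFC.sqrt B⁻¹ * B * CFC.sqrt B⁻¹ = 1 :=
  mul_eq_one_comm.mp (by rw [← Matrix.mul_assoc, hB.sqrt_inv_mul_sqrt_inv_mul_self])

lemma sqrt_mul_euclNorm_sqrt_inv_mulVec_le (hB : B.PosDef) {c : ℝ} (hc0 : 0 ≤ c)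
    (hc : ∀ j, c ≤ hB.1.eigenvalues j) (y : m → ℝ) :
    √c * euclNorm (CFC.sqrt B⁻¹ *ᵥ y) ≤ euclNorm y := by
  have hS : (CFC.sqrt B⁻¹).IsSymm := isHermitian_iff_isSymm.mp (isHermitian_sqrt B⁻¹)
  rw [← pow_le_pow_iff_left₀ (mul_nonneg (Real.sqrt_nonneg _) (euclNorm_nonneg _))
    (euclNorm_nonneg _) two_ne_zero, mul_pow, Real.sq_sqrt hc0]
  calc c * euclNorm (CFC.sqrt B⁻¹ *ᵥ y) ^ 2
      ≤ (CFC.sqrt B⁻¹ *ᵥ y) ⬝ᵥ (B *ᵥ (CFC.sqrt B⁻¹ *ᵥ y)) :=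
        hB.1.mul_sq_euclNorm_le_dotProduct_mulVec hc _
    _ = euclNorm y ^ 2 := by
        rw [hS.mulVec_dotProduct, mulVec_mulVec, mulVec_mulVec,
          hB.sqrt_inv_mul_self_mul_sqrt_inv, one_mulVec, euclNorm_sq]

theorem exists_abs_eigenvalues_sub_mul_le [Nonempty m] (hB : B.PosDef) {A : Matrix m m ℝ}
    (hC : (CFC.sqrt B⁻¹ * A * CFC.sqrt B⁻¹).IsHermitian) {c : ℝ} (hc0 : 0 ≤ c)
    (hc : ∀ j, c ≤ hB.1.eigenvalues j) (μ : ℝ) (u : m → ℝ) :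
    ∃ k, |hC.eigenvalues k - μ| * (c * euclNorm u) ≤ euclNorm (A *ᵥ u - μ • (B *ᵥ u)) := by
  set S := CFC.sqrt B⁻¹
  set r := A *ᵥ u - μ • (B *ᵥ u)
  set w := S *ᵥ (B *ᵥ u)
  have hSw : S *ᵥ w = u := by
    rw [mulVec_mulVec, mulVec_mulVec, hB.sqrt_inv_mul_sqrt_inv_mul_self, one_mulVec]
  have hCw : (S * A * S) *ᵥ w - μ • w = S *ᵥ r := by
    rw [← mulVec_mulVec, ← mulVec_mulVec, hSw, mulVec_sub, mulVec_smul]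
  obtain ⟨k, hk⟩ := hC.exists_abs_eigenvalues_sub_mul_euclNorm_le μ w
  rw [hCw] at hk
  have hw := hB.sqrt_mul_euclNorm_sqrt_inv_mulVec_le hc0 hc w
  rw [hSw] at hw
  refine ⟨k, ?_⟩
  calc |hC.eigenvalues k - μ| * (c * euclNorm u)
      = √c * (|hC.eigenvalues k - μ| * (√c * euclNorm u)) := by
        nth_rw 1 [← Real.mul_self_sqrt hc0]; ring
    _ ≤ √c * (|hC.eigenvalues k - μ| * euclNorm w) := by gcongr
    _ ≤ √c * euclNorm (S *ᵥ r) := by gcongr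
    _ ≤ euclNorm r := hB.sqrt_mul_euclNorm_sqrt_inv_mulVec_le hc0 hc r

end Matrix.PosDef

lemma Tuple.apply_sort_zero_le {α : Type*} [LinearOrder α] {N : ℕ} (f : Fin N → α)
    (hN : 0 < N) (i : Fin N) : f (Tuple.sort f ⟨0, hN⟩) ≤ f i := by
  simpa using Tuple.monotone_sort f
    (show (⟨0, hN⟩ : Fin N) ≤ (Tuple.sort f).symm i from Nat.zero_le _)

section GenEig

variable {m : Type*} [Fintype m] [DecidableEq m]

lemma genEig_eq {A B C : Matrix m m ℝ} (hA : A.IsHermitian) (hB : B.PosDef) (hC : C.IsHermitian)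
    (hCdef : CFC.sqrt B⁻¹ * A * CFC.sqrt B⁻¹ = C) (k : Fin (Fintype.card m)) :
    genEig A B k = hC.eigenvalues₀ (Tuple.sort hC.eigenvalues₀ k) := by
  subst hCdef
  rw [genEig, dif_pos ⟨hA, hB⟩]
  -- `genEig` is elaborated under `Classical.propDecidable`; `congr!` matches the instances.
  congr!

lemma genEig_one {M : Matrix m m ℝ} (hM : M.IsHermitian) (k : Fin (Fintype.card m)) :
    genEig M 1 k = hM.eigenvalues₀ (Tuple.sort hM.eigenvalues₀ k) :=
  genEig_eq hM PosDef.one hM (by simp [CFC.sqrt_one]) k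

end GenEig

lemma exists_genEigFin_eq_eigenvalues {n : ℕ} {A B : Matrix (Fin n) (Fin n) ℝ}
    (hA : A.IsHermitian) (hB : B.PosDef) (hC : (CFC.sqrt B⁻¹ * A * CFC.sqrt B⁻¹).IsHermitian)
    (k : Fin n) : ∃ j, genEigFin A B j = hC.eigenvalues k := by
  refine ⟨Fin.cast (Fintype.card_fin n) ((Tuple.sort hC.eigenvalues₀).symm
    ((Fintype.equivOfCardEq (Fintype.card_fin _)).symm k)), ?_⟩
  simp [genEigFin, genEig_eq hA hB hC rfl, IsHermitian.eigenvalues]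

section SmallestEigenvalue

variable {n : ℕ} {M : Matrix (Fin (n + 1)) (Fin (n + 1)) ℝ}

lemma genEigFin_one_zero_le (hM : M.IsHermitian) (k : Fin (n + 1)) :
    genEigFin M 1 0 ≤ hM.eigenvalues k := by
  rw [genEigFin, genEig_one hM]
  exact Tuple.apply_sort_zero_le _ (by simp) _

lemma genEigFin_one_zero_pos (hM : M.PosDef) : 0 < genEigFin M 1 0 := by
  rw [genEigFin, genEig_one hM.1]
  simpa [IsHermitian.eigenvalues] using
    hM.eigenvalues_pos (Fintype.equivOfCardEq (Fintype.card_fin _) (Tuple.sort hM.1.eigenvalues₀ _))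

end SmallestEigenvalue

theorem stmt_10_general {n : ℕ} (A B E F : Matrix (Fin (n + 1)) (Fin (n + 1)) ℝ)
    (hA : A.IsHermitian) (hE : E.IsHermitian)
    (hBt : (B + F).PosDef)
    (lam : Fin (n + 1) → ℝ) (u : Fin (n + 1) → Fin (n + 1) → ℝ)
    (hu : ∀ i, u i ≠ 0) (heig : ∀ i, A *ᵥ u i = lam i • (B *ᵥ u i)) :
    ∀ i, ∃ j, |genEigFin (A + E) (B + F) j - lam i| ≤
      (1 / genEigFin (B + F) 1 0) *
        (euclNorm (E *ᵥ u i) / euclNorm (u i) +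
          |lam i| * (euclNorm (F *ᵥ u i) / euclNorm (u i))) := by
  intro i
  have hAE : (A + E).IsHermitian := hA.add hE
  have hC := hAE.sqrt_inv_mul_mul_sqrt_inv (B + F)
  have hμ := genEigFin_one_zero_pos hBt
  have hres : (A + E) *ᵥ u i - lam i • ((B + F) *ᵥ u i) = E *ᵥ u i - lam i • (F *ᵥ u i) := by
    rw [add_mulVec, add_mulVec, heig i, smul_add]
    abel
  obtain ⟨k, hk⟩ := hBt.exists_abs_eigenvalues_sub_mul_le hC hμ.le
    (genEigFin_one_zero_le hBt.1) (lam i) (u i)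
  obtain ⟨j, hj⟩ := exists_genEigFin_eq_eigenvalues hAE hBt hC k
  refine ⟨j, ?_⟩
  have hupos := euclNorm_pos (hu i)
  rw [hj]
  calc |hC.eigenvalues k - lam i|
      ≤ euclNorm (E *ᵥ u i - lam i • (F *ᵥ u i)) / (genEigFin (B + F) 1 0 * euclNorm (u i)) :=
        (le_div_iff₀ (by positivity)).mpr (hres ▸ hk)
    _ ≤ (euclNorm (E *ᵥ u i) + |lam i| * euclNorm (F *ᵥ u i))
          / (genEigFin (B + F) 1 0 * euclNorm (u i)) := by
        gcongr
        exact euclNorm_sub_smul_le _ _ _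
    _ = _ := by field_simp

/-- Bauer–Fike type bound, first form. -/
theorem stmt_10 {n : ℕ} (A B E F : Matrix (Fin (n + 1)) (Fin (n + 1)) ℝ)
    (hA : A.IsHermitian) (hB : B.PosDef) (hE : E.IsHermitian) (hF : F.IsHermitian)
    (hBt : (B + F).PosDef)
    (lam : Fin (n + 1) → ℝ) (u : Fin (n + 1) → Fin (n + 1) → ℝ)
    (hu : ∀ i, u i ≠ 0) (heig : ∀ i, A *ᵥ u i = lam i • (B *ᵥ u i)) :
    ∀ i, ∃ j, |genEigFin (A + E) (B + F) j - lam i| ≤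
      (1 / genEigFin (B + F) 1 0) *
        (euclNorm (E *ᵥ u i) / euclNorm (u i) +
          |lam i| * (euclNorm (F *ᵥ u i) / euclNorm (u i))) :=
  stmt_10_general A B E F hA hE hBt lam u hu heig
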